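/- Let (A_q)_{q≥1} be a sequence of stochastic n×n real matrices and set P_q = A_q A_{q−1} ⋯ A_1. If δ(P_q) → 0 as q → ∞, then there exists f ∈ ℝ^n such that P_q converges entrywise, as q → ∞, to the rank-one matrix 1 f^T all of whose rows equal f^T; in particular, for every x0 ∈ ℝ^n there exists a ∈ ℝ with P_q x0 → a·1. -/

import Mathlib

/-!
For `q ≤ q'` the rows of `P q'` are convex combinations of the rows of `P q`, so every entry of
column `j` of `P q'` lies within `δ(P q)` of every entry of column `j` of `P q`. Hence each entry
sequence is Cauchy, and since the rows of `P q` differ by at most `δ(P q) → 0`, all entries of a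
column share one limit.
-/

open Filter Topology

/-- `δ(A) = max_j max_{i₁,i₂} |A_{i₁ j} - A_{i₂ j}|`. -/
noncomputable def matDelta {n : ℕ} (A : Matrix (Fin n) (Fin n) ℝ) : ℝ :=
  ⨆ j, ⨆ i₁, ⨆ i₂, |A i₁ j - A i₂ j|

open Matrix

theorem abs_sub_le_matDelta {n : ℕ} (A : Matrix (Fin n) (Fin n) ℝ) (i₁ i₂ j : Fin n) :
    |A i₁ j - A i₂ j| ≤ matDelta A := by
  have hbdd {α : Type} [Finite α] (g : α → ℝ) : BddAbove (Set.range g) :=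
    (Set.finite_range g).bddAbove
  calc |A i₁ j - A i₂ j| ≤ ⨆ i₂, |A i₁ j - A i₂ j| :=
        le_ciSup (hbdd fun i₂ => |A i₁ j - A i₂ j|) i₂
    _ ≤ ⨆ i₁, ⨆ i₂, |A i₁ j - A i₂ j| := le_ciSup (hbdd fun i₁ => ⨆ i₂, |A i₁ j - A i₂ j|) i₁
    _ ≤ matDelta A := le_ciSup (hbdd fun j => ⨆ i₁, ⨆ i₂, |A i₁ j - A i₂ j|) j

theorem abs_mul_apply_sub_le_of_mem_rowStochastic {ι : Type*} [Fintype ι] [DecidableEq ι]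
    {A P : Matrix ι ι ℝ} (hA : A ∈ rowStochastic ℝ ι) {j : ι} {c r : ℝ}
    (hP : ∀ l, |P l j - c| ≤ r) (i : ι) : |(A * P) i j - c| ≤ r := by
  have hrow := sum_row_of_mem_rowStochastic hA i
  calc |(A * P) i j - c| = |∑ l, A i l * (P l j - c)| := by
        simp only [mul_apply, mul_sub, Finset.sum_sub_distrib, ← Finset.sum_mul, hrow, one_mul]
    _ ≤ ∑ l, A i l * |P l j - c| := by
        refine (Finset.abs_sum_le_sum_abs _ _).trans (Finset.sum_le_sum fun l _ => ?_)
        rw [abs_mul, abs_of_nonneg (nonneg_of_mem_rowStochastic hA)]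
    _ ≤ ∑ l, A i l * r :=
        Finset.sum_le_sum fun l _ =>
          mul_le_mul_of_nonneg_left (hP l) (nonneg_of_mem_rowStochastic hA)
    _ = r := by rw [← Finset.sum_mul, hrow, one_mul]

section LeftProducts

variable {n : ℕ} {A P : ℕ → Matrix (Fin n) (Fin n) ℝ}
  (hA : ∀ q, A q ∈ rowStochastic ℝ (Fin n)) (hP : ∀ q, P (q + 1) = A (q + 1) * P q)
include hA hP

theorem abs_apply_sub_le_matDelta_of_le {q q' : ℕ} (hqq' : q ≤ q') (i k j : Fin n) :
    |P q' i j - P q k j| ≤ matDelta (P q) := by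
  induction q', hqq' using Nat.le_induction generalizing i with
  | base => exact abs_sub_le_matDelta _ i k j
  | succ q' _ ih =>
    rw [hP]
    exact abs_mul_apply_sub_le_of_mem_rowStochastic (hA _) ih i

theorem exists_tendsto_apply_of_tendsto_matDelta
    (hδ : Tendsto (fun q => matDelta (P q)) atTop (𝓝 0)) (j : Fin n) :
    ∃ c, ∀ i, Tendsto (fun q => P q i j) atTop (𝓝 c) := by
  -- Any row can serve as the reference row; row `j` is at hand.
  have hcauchy : CauchySeq fun q => P q j j :=
    cauchySeq_of_le_tendsto_0' _ (fun q q' hqq' => by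
      rw [Real.dist_eq, abs_sub_comm]
      exact abs_apply_sub_le_matDelta_of_le hA hP hqq' j j j) hδ
  obtain ⟨c, hc⟩ := cauchySeq_tendsto_of_complete hcauchy
  refine ⟨c, fun i => ?_⟩
  have hrows : Tendsto (fun q => P q i j - P q j j) atTop (𝓝 0) :=
    squeeze_zero_norm (fun q => abs_sub_le_matDelta (P q) i j j) hδ
  simpa using hrows.add hc

end LeftProducts

theorem delta_tendsto_zero_implies_consensus_general
    (n : ℕ)
    (A : ℕ → Matrix (Fin n) (Fin n) ℝ)
    (hstoch : ∀ q, (∀ i j, 0 ≤ A q i j) ∧ ∀ i, ∑ j, A q i j = 1)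
    (P : ℕ → Matrix (Fin n) (Fin n) ℝ)
    (hPrec : ∀ q, P (q + 1) = A (q + 1) * P q)
    (hdelta : Tendsto (fun q => matDelta (P q)) atTop (𝓝 0)) :
    ∃ f : Fin n → ℝ,
      (∀ i j, Tendsto (fun q => P q i j) atTop (𝓝 (f j))) ∧
      ∀ x0 : Fin n → ℝ, ∃ a : ℝ, ∀ i,
        Tendsto (fun q => (P q).mulVec x0 i) atTop (𝓝 a) := by
  have hA q : A q ∈ rowStochastic ℝ (Fin n) := mem_rowStochastic_iff_sum.mpr (hstoch q)
  choose f hf using exists_tendsto_apply_of_tendsto_matDelta hA hPrec hdelta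
  refine ⟨f, fun i j => hf j i, fun x0 => ⟨∑ j, f j * x0 j, fun i => ?_⟩⟩
  simpa only [mulVec, dotProduct] using
    tendsto_finsetSum _ fun j _ => (hf j i).mul (tendsto_const_nhds (x := x0 j))

/-- If the left products `P_q = A_q ⋯ A_1` of stochastic matrices satisfy
`δ(P_q) → 0`, then `P_q` converges entrywise to a rank-one matrix `𝟙 fᵀ`; in
particular every initial state is driven to consensus. -/
theorem delta_tendsto_zero_implies_consensus
    (n : ℕ) (hn : 1 ≤ n)
    (A : ℕ → Matrix (Fin n) (Fin n) ℝ)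
    (hstoch : ∀ q, (∀ i j, 0 ≤ A q i j) ∧ ∀ i, ∑ j, A q i j = 1)
    (P : ℕ → Matrix (Fin n) (Fin n) ℝ)
    (hP0 : P 0 = 1)
    (hPrec : ∀ q, P (q + 1) = A (q + 1) * P q)
    (hdelta : Tendsto (fun q => matDelta (P q)) atTop (𝓝 0)) :
    ∃ f : Fin n → ℝ,
      (∀ i j, Tendsto (fun q => P q i j) atTop (𝓝 (f j))) ∧
      ∀ x0 : Fin n → ℝ, ∃ a : ℝ, ∀ i,
        Tendsto (fun q => (P q).mulVec x0 i) atTop (𝓝 a) :=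
  delta_tendsto_zero_implies_consensus_general n A hstoch P hPrec hdelta
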